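/- arXiv:math/0703907 — 5 statements merged into one kernel-verified Lean document; each statement's English description precedes it below -/
import Mathlib

section
/- For every finite field F there exists s ∈ F such that the polynomial X² − s·X + 1 is irreducible in F[X]. -/
open Polynomial

/-- For any finite field `F`, there is some `s` with `X² - s·X + 1` irreducible
(the set `U_q` is nonempty). -/
theorem exists_irreducible_quadratic (F : Type*) [Field F] [Fintype F] :
    ∃ s : F, Irreducible (X ^ 2 - C s * X + 1 : F[X]) := by
  classical
  -- the set of "bad" values s = a + a⁻¹
  set T : Finset F := (Finset.univ.filter (· ≠ (0:F))).image (fun a => a + a⁻¹) with hT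
  have hcard : T.card < Fintype.card F := by
    calc T.card ≤ (Finset.univ.filter (· ≠ (0:F))).card := Finset.card_image_le
    _ < Fintype.card F := by
        rw [Finset.filter_ne']
        have : (0:F) ∈ (Finset.univ : Finset F) := Finset.mem_univ 0
        have := Finset.card_erase_lt_of_mem this
        simpa [Finset.card_univ] using this
  obtain ⟨s, hs⟩ : ∃ s, s ∉ T := by
    by_contra h
    push_neg at h
    have : T = Finset.univ := Finset.eq_univ_iff_forall.mpr h
    rw [this, Finset.card_univ] at hcard
    omega
  refine ⟨s, ?_⟩
  have hdeg : (X ^ 2 - C s * X + 1 : F[X]).natDegree = 2 := by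
    compute_degree!
  rw [irreducible_iff_roots_eq_zero_of_degree_le_three (by omega) (by omega)]
  rw [Multiset.eq_zero_iff_forall_notMem]
  intro a ha
  have hne : (X ^ 2 - C s * X + 1 : F[X]) ≠ 0 := fun h => by simp [h] at hdeg
  rw [mem_roots hne, IsRoot.def] at ha
  simp only [eval_add, eval_sub, eval_mul, eval_pow, eval_X, eval_C, eval_one] at ha
  have ha0 : a ≠ 0 := by
    rintro rfl; simp at ha
  apply hs
  rw [hT, Finset.mem_image]
  refine ⟨a, by simp [ha0], ?_⟩
  field_simp
  linear_combination ha
end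

section
/- Let p be a prime and let a, b ∈ ℚ be nonzero. Suppose the only solution (x, y, z) ∈ ℚ_p³ of z² = a·x² + b·y² is (0, 0, 0) (i.e., the quaternion algebra H_{a,b} is ramified at p). Then every s ∈ ℚ_p for which there exist x₁, x₂, x₃, x₄ ∈ ℚ_p with x₁² − a·x₂² − b·x₃² + a·b·x₄² = 1 and 2x₁ = s satisfies |s|_p ≤ 1, i.e., s ∈ ℤ_p. -/
open Polynomial in
/-- If `‖s‖ > 1` then `t² - s t + 1` has a root in `ℚ_p` (Hensel). -/
lemma quadratic_root_of_big_trace (p : ℕ) [Fact p.Prime] (s : ℚ_[p]) (h : 1 < ‖s‖) :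
    ∃ l : ℚ_[p], l ^ 2 - s * l + 1 = 0 := by
  have hs0 : s ≠ 0 := by rintro rfl; simp at h; linarith
  have hinv : ‖s⁻¹‖ ≤ 1 := by
    rw [norm_inv, inv_le_one_iff₀]; right; linarith
  set c : ℤ_[p] := ⟨s⁻¹, hinv⟩ with hc
  have hcs : (c : ℚ_[p]) = s⁻¹ := rfl
  set F : Polynomial ℤ_[p] := X ^ 2 - X + C (c ^ 2) with hF
  have heval : F.eval 1 = c ^ 2 := by simp [hF]
  have hderiv : F.derivative.eval 1 = 1 := by
    rw [hF]; simp [derivative_pow]; norm_num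
  have hclt : ‖(c : ℚ_[p])‖ < 1 := by
    rw [hcs, norm_inv, inv_lt_one_iff₀]; right; exact h
  have hclt' : ‖c‖ < 1 := hclt
  have hnorm : ‖F.eval 1‖ < ‖F.derivative.eval 1‖ ^ 2 := by
    rw [heval, hderiv, norm_one, one_pow, sq, norm_mul]
    nlinarith [norm_nonneg c]
  obtain ⟨z, hz, -⟩ := hensels_lemma hnorm
  rw [hF] at hz; simp at hz
  have hz2 : z ^ 2 - z + c ^ 2 = 0 := by linear_combination hz
  have hz' : (z : ℚ_[p]) ^ 2 - (z : ℚ_[p]) + s⁻¹ ^ 2 = 0 := by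
    have := congrArg (fun t : ℤ_[p] => (t : ℚ_[p])) hz2
    push_cast at this
    simpa [hcs] using this
  refine ⟨s * z, ?_⟩
  have key : s ^ 2 * ((z : ℚ_[p]) ^ 2 - z + s⁻¹ ^ 2) = (s * z) ^ 2 - s * (s * z) + 1 := by
    field_simp
  rw [hz', mul_zero] at key
  exact key.symm

/-- The quaternion norm form is anisotropic when the ternary form is. -/
lemma quaternary_anisotropic (p : ℕ) [Fact p.Prime] (A B : ℚ_[p])
    (hram : ∀ x y z : ℚ_[p],
      z ^ 2 = A * x ^ 2 + B * y ^ 2 → x = 0 ∧ y = 0 ∧ z = 0)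
    (w x y z : ℚ_[p])
    (h : w ^ 2 - A * x ^ 2 - B * y ^ 2 + A * B * z ^ 2 = 0) :
    w = 0 ∧ x = 0 ∧ y = 0 ∧ z = 0 := by
  by_cases h0 : y ^ 2 - A * z ^ 2 = 0
  · obtain ⟨hz, -, hy⟩ := hram z 0 y (by linear_combination h0)
    have hw : w ^ 2 = A * x ^ 2 + B * 0 ^ 2 := by
      rw [hz, hy] at h; linear_combination h
    obtain ⟨hx, -, hw'⟩ := hram x 0 w hw
    exact ⟨hw', hx, hy, hz⟩
  · exfalso
    have key : (w * y + A * x * z) ^ 2 =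
        A * (w * z + x * y) ^ 2 + B * (y ^ 2 - A * z ^ 2) ^ 2 := by
      linear_combination (y ^ 2 - A * z ^ 2) * h
    exact h0 (hram _ _ _ key).2.1

/-- Lemma (local `S_{a,b}`, ramified case, upper bound): if the quaternion
algebra `H_{a,b}` is ramified at `p` (i.e. `z² = a x² + b y²` has only the
trivial `ℚ_p`-solution), then every reduced trace `s` of a reduced-norm-1
element lies in `ℤ_p`, i.e. `S_{a,b}(ℚ_p) ⊆ ℤ_p`. -/
theorem ramified_quaternion_trace_integral (p : ℕ) [Fact p.Prime]
    (a b : ℚ) (ha : a ≠ 0) (hb : b ≠ 0)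
    (hram : ∀ x y z : ℚ_[p],
      z ^ 2 = (a : ℚ_[p]) * x ^ 2 + (b : ℚ_[p]) * y ^ 2 → x = 0 ∧ y = 0 ∧ z = 0)
    (s : ℚ_[p])
    (hs : ∃ x₁ x₂ x₃ x₄ : ℚ_[p],
      x₁ ^ 2 - (a : ℚ_[p]) * x₂ ^ 2 - (b : ℚ_[p]) * x₃ ^ 2 +
        (a : ℚ_[p]) * (b : ℚ_[p]) * x₄ ^ 2 = 1 ∧ 2 * x₁ = s) :
    ‖s‖ ≤ 1 := by
  by_contra hbig
  push_neg at hbig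
  obtain ⟨x₁, x₂, x₃, x₄, hnorm1, htr⟩ := hs
  obtain ⟨l, hl⟩ := quadratic_root_of_big_trace p s hbig
  have hzero : (x₁ - l) ^ 2 - (a : ℚ_[p]) * x₂ ^ 2 - (b : ℚ_[p]) * x₃ ^ 2 +
      (a : ℚ_[p]) * (b : ℚ_[p]) * x₄ ^ 2 = 0 := by
    linear_combination hnorm1 + hl - l * htr
  obtain ⟨hw, -, -, -⟩ := quaternary_anisotropic p a b hram (x₁ - l) x₂ x₃ x₄ hzero
  have hx₁ : x₁ = l := sub_eq_zero.mp hw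
  -- then l² = 1 since l² - (2l)l + 1 = 0
  have hl2 : l ^ 2 = 1 := by
    rw [hx₁] at htr
    linear_combination -hl + l * htr
  have hnl : ‖l‖ = 1 := by
    have h2 : ‖l‖ ^ 2 = 1 := by rw [← norm_pow, hl2, norm_one]
    have h3 : (‖l‖ - 1) * (‖l‖ + 1) = 0 := by nlinarith
    rcases mul_eq_zero.mp h3 with h | h
    · linarith
    · linarith [norm_nonneg l]
  have h2le : ‖(2 : ℚ_[p])‖ ≤ 1 := by
    simpa using Padic.norm_int_le_one (p := p) 2
  have : ‖s‖ ≤ 1 := by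
    rw [← htr, hx₁, norm_mul, hnl, mul_one]; exact h2le
  linarith
end

section
/- Let p be a prime and let a, b ∈ ℚ be nonzero. Suppose the only solution (x, y, z) ∈ ℚ_p³ of z² = a·x² + b·y² is (0, 0, 0) (i.e., the quaternion algebra H_{a,b} is ramified at p). Let s ∈ ℤ_p be such that X² − s̄·X + 1 is irreducible in 𝔽_p[X], where s̄ ∈ 𝔽_p is the reduction of s modulo p. Then there exist x₁, x₂, x₃, x₄ ∈ ℚ_p with x₁² − a·x₂² − b·x₃² + a·b·x₄² = 1 and 2x₁ = s. -/
/-!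
An element of reduced trace `s` and reduced norm `1` is `s/2 + q` with `q` a pure quaternion and
`q² = (s² - 4)/4`, so it suffices to write `s² - 4` as the square of a pure quaternion. This and
the ramification hypothesis are invariant under `(a, b) ↦ (b, a)`, `(a, b) ↦ (a c², b)` and
`(a, b) ↦ (-a b, a)`, so we may take `a` a `p`-adic unit and `b` a unit or `p` times a unit.
For odd `p`, irreducibility of `X² - s̄ X + 1` makes `s² - 4` a nonsquare unit, while `a` is a
nonsquare because the algebra is a division algebra; by Hensel's lemma `a (s² - 4)` is a square,
and `q` is a multiple of `i`. For `p = 2`, `s` is odd, so `s² - 4 ≡ 5 mod 8`. A search modulo 8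
finds either `(x, y) ≢ 0` with `a x² + b y² ≡ 1 mod 8`, a square by Hensel's lemma, which
ramification excludes, or a value `≡ 5 mod 8` of `a x² + b y² - a b z²`, which lies in the square
class of `s² - 4`.
-/

open Polynomial

section Quaternion

variable {K : Type*} [Field K] {a b c d : K}

/-- For `char K ≠ 2`: the quaternion algebra `(a, b)_K` is a division algebra. -/
def ConicAnisotropic (a b : K) : Prop :=
  ∀ x y z : K, z ^ 2 = a * x ^ 2 + b * y ^ 2 → x = 0 ∧ y = 0 ∧ z = 0

/-- `d = (x i + y j + z k)²` in `(a, b)_K`. -/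
def IsPureQuaternionSquare (a b d : K) : Prop :=
  ∃ x y z : K, a * x ^ 2 + b * y ^ 2 - a * b * z ^ 2 = d

namespace ConicAnisotropic

theorem swap (h : ConicAnisotropic a b) : ConicAnisotropic b a := fun x y z hxyz =>
  let ⟨hy, hx, hz⟩ := h y x z (by rw [hxyz]; ring)
  ⟨hx, hy, hz⟩

theorem of_mul_sq (hc : c ≠ 0) (h : ConicAnisotropic (a * c ^ 2) b) : ConicAnisotropic a b := by
  intro x y z hxyz
  obtain ⟨hx, hy, hz⟩ := h (x / c) y z (by rw [hxyz]; field_simp)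
  exact ⟨by simpa [hc] using hx, hy, hz⟩

theorem neg_mul (ha : a ≠ 0) (h : ConicAnisotropic a b) : ConicAnisotropic (-(a * b)) a := by
  intro x y z hxyz
  obtain ⟨hz, hx, hy⟩ := h z (a * x) (a * y) (by linear_combination (-a) * hxyz)
  exact ⟨by simpa [ha] using hx, by simpa [ha] using hy, hz⟩

theorem not_isSquare (h : ConicAnisotropic a b) {x y : K} (hxy : x ≠ 0 ∨ y ≠ 0) :
    ¬IsSquare (a * x ^ 2 + b * y ^ 2) := by
  rintro ⟨z, hz⟩
  obtain ⟨hx, hy, -⟩ := h x y z (by rw [hz]; ring)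
  tauto

end ConicAnisotropic

namespace IsPureQuaternionSquare

theorem self_left : IsPureQuaternionSquare a b a := ⟨1, 0, 0, by ring⟩

theorem swap (h : IsPureQuaternionSquare a b d) : IsPureQuaternionSquare b a d :=
  let ⟨x, y, z, h⟩ := h
  ⟨y, x, z, by rw [← h]; ring⟩

theorem mul_sq_left (hc : c ≠ 0) (h : IsPureQuaternionSquare a b d) :
    IsPureQuaternionSquare (a * c ^ 2) b d :=
  let ⟨x, y, z, h⟩ := h
  ⟨x / c, y, z / c, by rw [← h]; field_simp⟩

theorem of_neg_mul (h : IsPureQuaternionSquare (-(a * b)) a d) : IsPureQuaternionSquare a b d :=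
  let ⟨x, y, z, h⟩ := h
  ⟨y, a * z, x, by rw [← h]; ring⟩

theorem mul_sq (c : K) (h : IsPureQuaternionSquare a b d) :
    IsPureQuaternionSquare a b (d * c ^ 2) :=
  let ⟨x, y, z, h⟩ := h
  ⟨x * c, y * c, z * c, by rw [← h]; ring⟩

theorem of_isSquare_mul (hc : c ≠ 0) (hcd : IsSquare (c * d)) (h : IsPureQuaternionSquare a b c) :
    IsPureQuaternionSquare a b d := by
  obtain ⟨r, hr⟩ := hcd
  convert h.mul_sq (r / c) using 1
  field_simp
  linear_combination hr

end IsPureQuaternionSquare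

end Quaternion

theorem FiniteField.isSquare_mul_of_not_isSquare {F : Type*} [Field F] [Fintype F] {x y : F}
    (hx : ¬IsSquare x) (hy : ¬IsSquare y) : IsSquare (x * y) := by
  classical
  have hx0 : x ≠ 0 := by rintro rfl; exact hx IsSquare.zero
  have hy0 : y ≠ 0 := by rintro rfl; exact hy IsSquare.zero
  rw [← quadraticChar_one_iff_isSquare (mul_ne_zero hx0 hy0), map_mul,
    quadraticChar_neg_one_iff_not_isSquare.2 hx, quadraticChar_neg_one_iff_not_isSquare.2 hy]
  norm_num

theorem Polynomial.sq_sub_mul_add_one_ne_zero_of_irreducible {R : Type*} [CommRing R] [IsDomain R]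
    {t : R} (h : Irreducible (X ^ 2 - C t * X + 1 : R[X])) (x : R) : x ^ 2 - t * x + 1 ≠ 0 := by
  intro hx
  have h1 := degree_eq_one_of_irreducible_of_root h (x := x) (by simp [hx])
  have h2 : (X ^ 2 - C t * X + 1 : R[X]).degree = 2 := by compute_degree!
  rw [h2] at h1
  exact absurd h1 (by decide)

theorem Polynomial.not_isSquare_sq_sub_four_of_irreducible {F : Type*} [Field F] [NeZero (2 : F)]
    {t : F} (h : Irreducible (X ^ 2 - C t * X + 1 : F[X])) : ¬IsSquare (t ^ 2 - 4) := by
  rintro ⟨r, hr⟩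
  obtain ⟨x, hx⟩ := exists_quadratic_eq_zero (a := 1) (b := -t) (c := 1) one_ne_zero
    ⟨r, by rw [discrim, ← hr]; ring⟩
  exact sq_sub_mul_add_one_ne_zero_of_irreducible h x (by linear_combination hx)

theorem ZMod.two_ne_zero_of_ne_two {p : ℕ} [Fact p.Prime] (hp : p ≠ 2) : (2 : ZMod p) ≠ 0 :=
  Ring.two_ne_zero (by rwa [ZMod.ringChar_zmod_n])

namespace PadicInt

variable {p : ℕ} [Fact p.Prime]

@[simp, norm_cast]
theorem coe_ofNat (n : ℕ) [n.AtLeastTwo] :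
    ((no_index (OfNat.ofNat n) : ℤ_[p]) : ℚ_[p]) = OfNat.ofNat n :=
  map_ofNat Coe.ringHom n

theorem isSquare_coe {x : ℤ_[p]} (h : IsSquare x) : IsSquare (x : ℚ_[p]) :=
  let ⟨r, hr⟩ := h
  ⟨r, by rw [hr, coe_mul]⟩

theorem isUnit_iff_toZMod_ne_zero {x : ℤ_[p]} : IsUnit x ↔ toZMod x ≠ 0 := by
  rw [← IsLocalRing.notMem_maximalIdeal, ← ker_toZMod, RingHom.mem_ker]

theorem norm_lt_one_iff_toZMod_eq_zero {x : ℤ_[p]} : ‖x‖ < 1 ↔ toZMod x = 0 := by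
  rw [← not_isUnit_iff, isUnit_iff_toZMod_ne_zero, not_not]

theorem isSquare_of_norm_sq_sub_lt {u c : ℤ_[p]} (h : ‖c ^ 2 - u‖ < ‖2 * c‖ ^ 2) : IsSquare u := by
  have hF : aeval c (X ^ 2 - C u) = c ^ 2 - u := by simp
  have hF' : aeval c (derivative (X ^ 2 - C u)) = 2 * c := by simp [one_add_one_eq_two]
  obtain ⟨r, hr, -⟩ := hensels_lemma (F := X ^ 2 - C u) (a := c) (by rwa [hF, hF'])
  exact ⟨r, by simp at hr; linear_combination -hr⟩

theorem isSquare_of_isSquare_toZMod (hp : p ≠ 2) {u : ℤ_[p]} (hu : toZMod u ≠ 0)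
    (h : IsSquare (toZMod u)) : IsSquare u := by
  obtain ⟨r, hr⟩ := h
  obtain ⟨c, rfl⟩ := ZMod.ringHom_surjective toZMod r
  have h2c : ‖2 * c‖ = 1 := by
    refine isUnit_iff.1 (isUnit_iff_toZMod_ne_zero.2 ?_)
    rw [map_mul, map_ofNat]
    exact mul_ne_zero (ZMod.two_ne_zero_of_ne_two hp) (by rintro h0; simp_all)
  refine isSquare_of_norm_sq_sub_lt (c := c) ?_
  rw [h2c, one_pow, norm_lt_one_iff_toZMod_eq_zero, map_sub, map_pow, hr, sq, sub_self]

theorem isSquare_of_toZModPow_three_eq_one {u : ℤ_[2]} (h : toZModPow 3 u = 1) : IsSquare u := by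
  refine isSquare_of_norm_sq_sub_lt (c := 1) ?_
  have h8 : ‖(1 : ℤ_[2]) ^ 2 - u‖ ≤ (2 : ℝ) ^ (-3 : ℤ) := by
    have := (norm_le_pow_iff_mem_span_pow ((1 : ℤ_[2]) ^ 2 - u) 3).2
      (by rw [← ker_toZModPow, RingHom.mem_ker, map_sub, h]; simp)
    exact_mod_cast this
  have h2 : ‖(2 : ℤ_[2]) * 1‖ = 2⁻¹ := by simpa using norm_p (p := 2)
  rw [h2]
  calc _ ≤ _ := h8
    _ < _ := by norm_num

theorem toZModPow_three_sq_eq_one {x : ℤ_[2]} (hx : IsUnit x) :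
    toZModPow 3 x ^ 2 = 1 := by
  obtain ⟨y, hy⟩ := (hx.map (toZModPow 3)).exists_right_inv
  generalize toZModPow 3 x = z at hy ⊢
  revert z y
  decide

end PadicInt

theorem Padic.exists_eq_pow_mul_unit_mul_sq {p : ℕ} [Fact p.Prime] {x : ℚ_[p]} (hx : x ≠ 0) :
    ∃ (e : ℕ) (u : ℤ_[p]ˣ) (c : ℚ_[p]), e < 2 ∧ c ≠ 0 ∧ x = p ^ e * u * c ^ 2 := by
  have hp : (p : ℚ_[p]) ≠ 0 := by exact_mod_cast (Fact.out : p.Prime).ne_zero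
  have hu : ‖x * (p : ℚ_[p]) ^ (-x.valuation)‖ = 1 := by
    rw [norm_mul, Padic.norm_eq_zpow_neg_valuation hx, Padic.norm_p_zpow, neg_neg,
      ← zpow_add₀ (by exact_mod_cast (Fact.out : p.Prime).ne_zero)]
    simp
  obtain ⟨u, hxu⟩ : ∃ u : ℤ_[p]ˣ, x = u * (p : ℚ_[p]) ^ x.valuation :=
    ⟨PadicInt.mkUnits hu, by rw [PadicInt.mkUnits_eq, mul_assoc, ← zpow_add₀ hp]; simp⟩
  obtain ⟨k, hk | hk⟩ := Int.even_or_odd' x.valuation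
  · refine ⟨0, u, p ^ k, by norm_num, zpow_ne_zero _ hp, ?_⟩
    rw [hxu, hk, mul_comm 2 k, zpow_mul]
    norm_num
  · refine ⟨1, u, p ^ k, by norm_num, zpow_ne_zero _ hp, ?_⟩
    rw [hxu, hk, zpow_add_one₀ hp, mul_comm 2 k, zpow_mul]
    norm_num
    ring

theorem isPureQuaternionSquare_of_forall_unit {p : ℕ} [Fact p.Prime] {d : ℚ_[p]}
    (hunit : ∀ (u v : ℤ_[p]ˣ) (e : ℕ), e < 2 → ConicAnisotropic (u : ℚ_[p]) (p ^ e * v) →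
      IsPureQuaternionSquare (u : ℚ_[p]) (p ^ e * v) d)
    {a b : ℚ_[p]} (ha : a ≠ 0) (hb : b ≠ 0) (h : ConicAnisotropic a b) :
    IsPureQuaternionSquare a b d := by
  have hleft : ∀ (u : ℤ_[p]ˣ) (c a b : ℚ_[p]), c ≠ 0 → b ≠ 0 → a = u * c ^ 2 →
      ConicAnisotropic a b → IsPureQuaternionSquare a b d := by
    rintro u c a b hc hb rfl h
    obtain ⟨e, v, c', he, hc', rfl⟩ := Padic.exists_eq_pow_mul_unit_mul_sq hb
    have h' := ((h.of_mul_sq hc).swap.of_mul_sq hc').swap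
    exact (((hunit u v e he h').swap.mul_sq_left hc').swap.mul_sq_left hc)
  obtain ⟨i, u, c, hi, hc, rfl⟩ := Padic.exists_eq_pow_mul_unit_mul_sq ha
  interval_cases i
  · exact hleft u c _ b hc hb (by ring) h
  obtain ⟨j, v, c', hj, hc', rfl⟩ := Padic.exists_eq_pow_mul_unit_mul_sq hb
  interval_cases j
  · exact (hleft v c' _ _ hc' ha (by ring) h.swap).swap
  have hp : (p : ℚ_[p]) ≠ 0 := by exact_mod_cast (Fact.out : p.Prime).ne_zero
  refine .of_neg_mul (hleft (-(u * v)) (p * c * c') _ _ (by simp [*]) ha ?_ (h.neg_mul ha))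
  push_cast
  ring

open PadicInt in
theorem isPureQuaternionSquare_of_not_isSquare_toZMod {p : ℕ} [Fact p.Prime] (hp : p ≠ 2)
    {D : ℤ_[p]} (hD : ¬IsSquare (toZMod D)) (u : ℤ_[p]ˣ) {b : ℚ_[p]}
    (h : ConicAnisotropic (u : ℚ_[p]) b) : IsPureQuaternionSquare (u : ℚ_[p]) b D := by
  have hu : toZMod (u : ℤ_[p]) ≠ 0 := isUnit_iff_toZMod_ne_zero.1 u.isUnit
  have hu_sq : ¬IsSquare (toZMod (u : ℤ_[p])) := fun hsq =>
    h.not_isSquare (x := 1) (y := 0) (Or.inl one_ne_zero)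
      (by simpa using isSquare_coe (isSquare_of_isSquare_toZMod hp hu hsq))
  have huD : IsSquare ((u : ℤ_[p]) * D) := by
    refine isSquare_of_isSquare_toZMod hp ?_ ?_ <;> rw [map_mul]
    · exact mul_ne_zero hu (by rintro h0; exact hD (h0 ▸ IsSquare.zero))
    · exact FiniteField.isSquare_mul_of_not_isSquare hu_sq hD
  exact IsPureQuaternionSquare.self_left.of_isSquare_mul (by simp)
    (by simpa using isSquare_coe huD)

-- In `ZMod 8`, `x ^ 2 = 1` says that `x` is odd.
theorem ZMod.eight_isotropic_or_represents_five :
    ∀ u v : ZMod (2 ^ 3), u ^ 2 = 1 → v ^ 2 = 1 → ∀ e < 2,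
      (∃ x y : ZMod (2 ^ 3), (x ≠ 0 ∨ y ≠ 0) ∧ u * x ^ 2 + 2 ^ e * v * y ^ 2 = 1) ∨
        ∃ x y z : ZMod (2 ^ 3), u * x ^ 2 + 2 ^ e * v * y ^ 2 - u * (2 ^ e * v) * z ^ 2 = 5 := by
  decide

open PadicInt in
theorem isPureQuaternionSquare_of_toZModPow_three_eq_five {D : ℤ_[2]} (hD : toZModPow 3 D = 5)
    (u v : ℤ_[2]ˣ) {e : ℕ} (he : e < 2) (h : ConicAnisotropic (u : ℚ_[2]) (2 ^ e * v)) :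
    IsPureQuaternionSquare (u : ℚ_[2]) (2 ^ e * v) D := by
  have hne : ∀ x : ℤ_[2], toZModPow 3 x ≠ 0 → (x : ℚ_[2]) ≠ 0 := fun x hx h0 =>
    hx (by rw [coe_eq_zero.1 h0, map_zero])
  rcases ZMod.eight_isotropic_or_represents_five _ _ (toZModPow_three_sq_eq_one u.isUnit)
    (toZModPow_three_sq_eq_one v.isUnit) e he with ⟨x, y, hxy, hval⟩ | ⟨x, y, z, hval⟩
  · obtain ⟨x, rfl⟩ := ZMod.ringHom_surjective (toZModPow 3) x
    obtain ⟨y, rfl⟩ := ZMod.ringHom_surjective (toZModPow 3) y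
    have hsq := isSquare_coe (isSquare_of_toZModPow_three_eq_one
      (u := u * x ^ 2 + 2 ^ e * v * y ^ 2) (by simpa [map_ofNat] using hval))
    push_cast at hsq
    exact (h.not_isSquare (hxy.imp (hne x) (hne y)) hsq).elim
  · obtain ⟨x, rfl⟩ := ZMod.ringHom_surjective (toZModPow 3) x
    obtain ⟨y, rfl⟩ := ZMod.ringHom_surjective (toZModPow 3) y
    obtain ⟨z, rfl⟩ := ZMod.ringHom_surjective (toZModPow 3) z
    have hrep : IsPureQuaternionSquare (u : ℚ_[2]) (2 ^ e * v)
        ((u * x ^ 2 + 2 ^ e * v * y ^ 2 - u * (2 ^ e * v) * z ^ 2 : ℤ_[2]) : ℚ_[2]) :=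
      ⟨x, y, z, by push_cast; ring⟩
    generalize ht : (u * x ^ 2 + 2 ^ e * v * y ^ 2 - u * (2 ^ e * v) * z ^ 2 : ℤ_[2]) = t at hrep
    have ht5 : toZModPow 3 t = 5 := by rw [← ht]; simpa [map_ofNat] using hval
    refine hrep.of_isSquare_mul (hne t (by rw [ht5]; decide)) ?_
    exact_mod_cast isSquare_coe (isSquare_of_toZModPow_three_eq_one (u := t * D)
      (by rw [map_mul, ht5, hD]; decide))

/-- Lemma (local `S_{a,b}`, ramified case, lower bound): if `H_{a,b}` is
ramified at `p` and `s ∈ ℤ_p` has reduction `s̄ ∈ 𝔽_p` with `X² - s̄·X + 1`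
irreducible, then `s` is a reduced trace of a reduced-norm-1 element of
`H_{a,b} ⊗ ℚ_p`, i.e. `red_p⁻¹(U_p) ⊆ S_{a,b}(ℚ_p)`. -/
theorem ramified_quaternion_trace_of_irreducible_reduction (p : ℕ) [Fact p.Prime]
    (a b : ℚ) (ha : a ≠ 0) (hb : b ≠ 0)
    (hram : ∀ x y z : ℚ_[p],
      z ^ 2 = (a : ℚ_[p]) * x ^ 2 + (b : ℚ_[p]) * y ^ 2 → x = 0 ∧ y = 0 ∧ z = 0)
    (s : ℤ_[p])
    (hs : Irreducible (X ^ 2 - C (PadicInt.toZMod s) * X + 1 : (ZMod p)[X])) :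
    ∃ x₁ x₂ x₃ x₄ : ℚ_[p],
      x₁ ^ 2 - (a : ℚ_[p]) * x₂ ^ 2 - (b : ℚ_[p]) * x₃ ^ 2 +
        (a : ℚ_[p]) * (b : ℚ_[p]) * x₄ ^ 2 = 1 ∧ 2 * x₁ = (s : ℚ_[p]) := by
  have hD : IsPureQuaternionSquare (a : ℚ_[p]) b (s ^ 2 - 4 : ℤ_[p]) := by
    refine isPureQuaternionSquare_of_forall_unit ?_ (by exact_mod_cast ha) (by exact_mod_cast hb) hram
    rcases eq_or_ne p 2 with rfl | hp
    · have hs0 : PadicInt.toZMod s ≠ 0 := fun h0 =>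
        sq_sub_mul_add_one_ne_zero_of_irreducible hs 1 (by rw [h0]; rfl)
      have hs5 : PadicInt.toZModPow 3 (s ^ 2 - 4) = 5 := by
        rw [map_sub, map_pow, map_ofNat,
          PadicInt.toZModPow_three_sq_eq_one (PadicInt.isUnit_iff_toZMod_ne_zero.2 hs0)]
        decide
      intro u v e he h
      simpa using isPureQuaternionSquare_of_toZModPow_three_eq_five hs5 u v he (by simpa using h)
    · have : NeZero (2 : ZMod p) := ⟨ZMod.two_ne_zero_of_ne_two hp⟩
      refine fun u v e _ => isPureQuaternionSquare_of_not_isSquare_toZMod hp ?_ u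
      rw [map_sub, map_pow, map_ofNat]
      exact not_isSquare_sq_sub_four_of_irreducible hs
  obtain ⟨x, y, z, hxyz⟩ := hD.mul_sq 2⁻¹
  refine ⟨s / 2, x, y, z, ?_, by ring⟩
  push_cast at hxyz
  linear_combination -hxyz
end

section
/- For every prime p there exist rational numbers a and b such that the only solution (x, y, z) ∈ ℚ_p³ of z² = (a²+b²+1)·x² + (a²+a+1+b²)·y² is (0, 0, 0); that is, the quaternion algebra H_{a²+b²+1, a²+a+1+b²} is ramified at p. -/
/-!
Write `A = a² + b² + 1` and `B = A + a`. A nonzero solution over `ℚ_[p]`, divided by its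
coordinate of largest norm, becomes a solution over `ℤ_[p]` that is not divisible by `p`; so it
suffices to choose `a, b` for which every `ℤ_[p]`-solution is divisible by `p`.

For `p = 2` take `(a, b) = (1, 0)`, i.e. `(A, B) = (2, 3)`, and check modulo `8`. For odd `p`
arrange `p ∥ A`. If `p ≡ 3 mod 4`, `a² + b² + 1 ≡ 0` has a solution with `a` a non-square mod `p`
(because `-1` is a non-square, `±a` give the same `A` and one of them is a non-square), and then
`B ≡ a` is a non-square unit. If `p ≡ 1 mod 4`, take `p ∣ a`, so that `A = pA₁`, `B = pB₁`, and
choose `a / p` so that `-A₁B₁` is a non-square mod `p`; the substitution `(x, y, z) ↦ (z, y, Ax)`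
and rescaling `y` turn `(A, B)` into `(pA₁, -A₁B₁)`, which is the previous case.
-/

def TernaryAnisotropic {K : Type*} [Field K] (A B : K) : Prop :=
  ∀ x y z : K, z ^ 2 = A * x ^ 2 + B * y ^ 2 → x = 0 ∧ y = 0 ∧ z = 0

namespace TernaryAnisotropic

variable {K : Type*} [Field K] {a b : K}

theorem of_neg_mul (ha : a ≠ 0) (h : TernaryAnisotropic a (-(a * b))) :
    TernaryAnisotropic a b := by
  intro x y z hxyz
  obtain ⟨hz, hy, hax⟩ := h z y (a * x) (by linear_combination -a * hxyz)
  exact ⟨(mul_eq_zero.1 hax).resolve_left ha, hy, hz⟩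

theorem mul_sq (h : TernaryAnisotropic a b) {c : K} (hc : c ≠ 0) :
    TernaryAnisotropic a (b * c ^ 2) := by
  intro x y z hxyz
  obtain ⟨hx, hcy, hz⟩ := h x (c * y) z (by linear_combination hxyz)
  exact ⟨hx, (mul_eq_zero.1 hcy).resolve_left hc, hz⟩

end TernaryAnisotropic

namespace PadicInt

variable {p : ℕ} [Fact p.Prime]

theorem dvd_iff_toZMod_eq_zero (x : ℤ_[p]) : (p : ℤ_[p]) ∣ x ↔ toZMod x = 0 := by
  rw [← Ideal.mem_span_singleton, ← maximalIdeal_eq_span_p, ← ker_toZMod, RingHom.mem_ker]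

theorem ternaryAnisotropic_of_forall_dvd {A B : ℤ_[p]}
    (h : ∀ x y z : ℤ_[p], z ^ 2 = A * x ^ 2 + B * y ^ 2 →
      (p : ℤ_[p]) ∣ x ∧ (p : ℤ_[p]) ∣ y ∧ (p : ℤ_[p]) ∣ z) :
    TernaryAnisotropic (A : ℚ_[p]) B := by
  intro x y z hxyz
  by_contra hne
  obtain ⟨w, hwm⟩ : ∃ w : ℚ_[p], ‖w‖ = max ‖x‖ (max ‖y‖ ‖z‖) := by
    rcases max_choice ‖x‖ (max ‖y‖ ‖z‖) with hm | hm
    · exact ⟨x, hm.symm⟩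
    rcases max_choice ‖y‖ ‖z‖ with hm' | hm' <;> rw [hm, hm']
    exacts [⟨y, rfl⟩, ⟨z, rfl⟩]
  have hw : w ≠ 0 := by
    rintro rfl
    refine hne ⟨?_, ?_, ?_⟩ <;> rw [← norm_le_zero_iff, ← norm_zero (E := ℚ_[p]), hwm] <;> simp
  have hlift : ∀ v : ℚ_[p], ‖v‖ ≤ ‖w‖ → ∃ V : ℤ_[p], (V : ℚ_[p]) = v / w := fun v hv =>
    ⟨⟨v / w, by rwa [norm_div, div_le_one (norm_pos_iff.2 hw)]⟩, rfl⟩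
  obtain ⟨X, hX⟩ := hlift x (by simp [hwm])
  obtain ⟨Y, hY⟩ := hlift y (by simp [hwm])
  obtain ⟨Z, hZ⟩ := hlift z (by simp [hwm])
  obtain ⟨hx, hy, hz⟩ := h X Y Z <| ext <| by
    push_cast [hX, hY, hZ]
    field_simp
    linear_combination hxyz
  simp only [← norm_lt_one_iff_dvd, norm_def, hX, hY, hZ, norm_div,
    div_lt_one (norm_pos_iff.2 hw)] at hx hy hz
  exact (max_lt hx (max_lt hy hz)).ne hwm.symm

theorem dvd_of_sq_eq_prime_mul_add {A₁ B x y z : ℤ_[p]} (hA₁ : toZMod A₁ ≠ 0)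
    (hB : ¬IsSquare (toZMod B)) (h : z ^ 2 = p * A₁ * x ^ 2 + B * y ^ 2) :
    (p : ℤ_[p]) ∣ x ∧ (p : ℤ_[p]) ∣ y ∧ (p : ℤ_[p]) ∣ z := by
  have hmod : toZMod z ^ 2 = toZMod B * toZMod y ^ 2 := by
    simpa using congrArg toZMod h
  have hy : toZMod y = 0 := by
    by_contra hy
    exact hB ⟨toZMod z / toZMod y, by field_simp; linear_combination -hmod⟩
  have hz : toZMod z = 0 := by simpa [hy] using hmod
  rw [← dvd_iff_toZMod_eq_zero] at hy hz
  obtain ⟨y', rfl⟩ := hy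
  obtain ⟨z', rfl⟩ := hz
  have hx : (p : ℤ_[p]) ∣ A₁ * x ^ 2 :=
    ⟨z' ^ 2 - B * y' ^ 2, mul_left_cancel₀ prime_p.ne_zero (by linear_combination -h)⟩
  rw [dvd_iff_toZMod_eq_zero, map_mul, map_pow, mul_eq_zero, pow_eq_zero_iff two_ne_zero] at hx
  exact ⟨(dvd_iff_toZMod_eq_zero x).2 (hx.resolve_left hA₁), dvd_mul_right _ _, dvd_mul_right _ _⟩

theorem ternaryAnisotropic_prime_mul {A₁ B : ℤ_[p]} (hA₁ : toZMod A₁ ≠ 0)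
    (hB : ¬IsSquare (toZMod B)) : TernaryAnisotropic ((p : ℚ_[p]) * A₁) B := by
  simpa using ternaryAnisotropic_of_forall_dvd fun x y z h => dvd_of_sq_eq_prime_mul_add hA₁ hB h

theorem ternaryAnisotropic_prime_mul_prime_mul {A₁ B₁ : ℤ_[p]}
    (h : ¬IsSquare (-toZMod (A₁ * B₁))) : TernaryAnisotropic ((p : ℚ_[p]) * A₁) (p * B₁) := by
  have hA₁ : toZMod A₁ ≠ 0 := fun h0 => h ⟨0, by simp [h0]⟩
  have hp : (p : ℚ_[p]) ≠ 0 := by exact_mod_cast (Fact.out : p.Prime).ne_zero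
  have hA₁' : A₁ ≠ 0 := by rintro rfl; simp at hA₁
  refine .of_neg_mul (mul_ne_zero hp (coe_eq_zero.not.2 hA₁')) ?_
  convert (ternaryAnisotropic_prime_mul hA₁ (B := -(A₁ * B₁)) (by simpa using h)).mul_sq hp
    using 1
  push_cast
  ring

theorem dvd_of_sq_eq_two_mul_add_three_mul {x y z : ℤ_[2]}
    (h : z ^ 2 = 2 * x ^ 2 + 3 * y ^ 2) : (2 : ℤ_[2]) ∣ x ∧ (2 : ℤ_[2]) ∣ y ∧ (2 : ℤ_[2]) ∣ z := by
  have key : ∀ u v w : ZMod (2 ^ 3), w ^ 2 = 2 * u ^ 2 + 3 * v ^ 2 →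
      (u.cast : ZMod (2 ^ 1)) = 0 ∧ (v.cast : ZMod (2 ^ 1)) = 0 ∧ (w.cast : ZMod (2 ^ 1)) = 0 := by
    decide
  have hdvd : ∀ w : ℤ_[2], toZModPow 1 w = 0 → (2 : ℤ_[2]) ∣ w := fun w hw => by
    simpa [Ideal.mem_span_singleton] using (ker_toZModPow 1).le hw
  obtain ⟨hx, hy, hz⟩ := key _ _ _ (by simpa [map_ofNat] using congrArg (toZModPow 3) h)
  simp only [cast_toZModPow 1 3 (by norm_num)] at hx hy hz
  exact ⟨hdvd x hx, hdvd y hy, hdvd z hz⟩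

end PadicInt

theorem exists_not_isSquare_sq_eq {F : Type*} [Field F] (h : ¬IsSquare (-1 : F)) {s : F}
    (hs : s ≠ 0) : ∃ c : F, ¬IsSquare c ∧ c ^ 2 = s ^ 2 := by
  by_cases hsq : IsSquare s
  · refine ⟨-s, fun hneg => h ?_, by ring⟩
    simpa [hs] using hneg.div hsq
  · exact ⟨s, hsq, rfl⟩

namespace ZMod

variable {p : ℕ} [Fact p.Prime]

theorem exists_sq_add_eq_prime_mul (hp : p ≠ 2) (c : ℤ) {t : ZMod p} (ht : t ≠ 0)
    (h : t ^ 2 + c = 0) : ∃ b m : ℤ, (b : ZMod p) = t ∧ b ^ 2 + c = p * m ∧ (m : ZMod p) ≠ 0 := by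
  obtain ⟨b, rfl⟩ := intCast_surjective t
  obtain ⟨m, hm⟩ : (p : ℤ) ∣ b ^ 2 + c := by
    rw [← intCast_zmod_eq_zero_iff_dvd]
    push_cast
    exact h
  by_cases hm0 : (m : ZMod p) = 0
  -- replacing `b` by `b + p` changes `m` by `2b + p`, which is a unit mod `p`
  · refine ⟨b + p, m + 2 * b + p, by simp, by linear_combination hm, ?_⟩
    push_cast
    rw [hm0, natCast_self, zero_add, add_zero]
    exact mul_ne_zero (Ring.two_ne_zero (by rwa [ringChar_zmod_n])) ht
  · exact ⟨b, m, rfl, hm, hm0⟩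

end ZMod

theorem exists_int_ternaryAnisotropic_two :
    ∃ a b : ℤ, TernaryAnisotropic ((a ^ 2 + b ^ 2 + 1 : ℤ) : ℚ_[2]) (a ^ 2 + a + 1 + b ^ 2 : ℤ) := by
  refine ⟨1, 0, ?_⟩
  convert PadicInt.ternaryAnisotropic_of_forall_dvd (p := 2) (A := 2) (B := 3) fun x y z h => by
    simpa using PadicInt.dvd_of_sq_eq_two_mul_add_three_mul h using 1 <;> norm_num <;> rfl

section

variable {p : ℕ} [Fact p.Prime]

theorem exists_int_ternaryAnisotropic_of_mod_four_eq_three (hp : p % 4 = 3) :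
    ∃ a b : ℤ, TernaryAnisotropic ((a ^ 2 + b ^ 2 + 1 : ℤ) : ℚ_[p]) (a ^ 2 + a + 1 + b ^ 2 : ℤ) := by
  have hns : ¬IsSquare (-1 : ZMod p) := by rw [ZMod.exists_sq_eq_neg_one_iff]; omega
  obtain ⟨s, t, hst⟩ := ZMod.sq_add_sq p (-1)
  have hs : s ≠ 0 := by rintro rfl; exact hns ⟨t, by linear_combination -hst⟩
  have ht : t ≠ 0 := by rintro rfl; exact hns ⟨s, by linear_combination -hst⟩
  obtain ⟨c, hc, hcs⟩ := exists_not_isSquare_sq_eq hns hs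
  obtain ⟨a, rfl⟩ := ZMod.intCast_surjective c
  obtain ⟨b, m, -, hbm, hm⟩ := ZMod.exists_sq_add_eq_prime_mul (by omega) (a ^ 2 + 1) ht
    (by push_cast; linear_combination hst + hcs)
  refine ⟨a, b, ?_⟩
  rw [show a ^ 2 + b ^ 2 + 1 = p * m by linear_combination hbm,
    show a ^ 2 + a + 1 + b ^ 2 = p * m + a by linear_combination hbm]
  simpa using PadicInt.ternaryAnisotropic_prime_mul (A₁ := (m : ℤ_[p]))
    (B := ((p * m + a : ℤ) : ℤ_[p])) (by simpa using hm) (by simpa using hc)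

theorem exists_int_ternaryAnisotropic_of_mod_four_eq_one (hp : p % 4 = 1) :
    ∃ a b : ℤ, TernaryAnisotropic ((a ^ 2 + b ^ 2 + 1 : ℤ) : ℚ_[p]) (a ^ 2 + a + 1 + b ^ 2 : ℤ) := by
  obtain ⟨i, hi⟩ := ZMod.exists_sq_eq_neg_one_iff.2 (by omega : p % 4 ≠ 3)
  have hi0 : i ≠ 0 := by rintro rfl; simp at hi
  obtain ⟨g, hg⟩ : ∃ g : ZMod p, ¬IsSquare g :=
    FiniteField.exists_nonsquare (by rw [ZMod.ringChar_zmod_n]; omega)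
  obtain ⟨b, m, -, hbm, hm⟩ := ZMod.exists_sq_add_eq_prime_mul (by omega) 1 hi0
    (by push_cast; linear_combination -hi)
  -- then `-A₁B₁ ≡ -m (m + α) = g` for `A₁ = m + pα²`, `B₁ = A₁ + α`
  obtain ⟨α, hα⟩ := ZMod.intCast_surjective (-(m : ZMod p) - g / (m : ZMod p))
  refine ⟨p * α, b, ?_⟩
  rw [show (p * α) ^ 2 + b ^ 2 + 1 = p * (m + p * α ^ 2) by linear_combination hbm,
    show (p * α) ^ 2 + p * α + 1 + b ^ 2 = p * (m + p * α ^ 2 + α) by linear_combination hbm]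
  have hA₁B₁ : ¬IsSquare (-PadicInt.toZMod
      (((m + p * α ^ 2 : ℤ) : ℤ_[p]) * ((m + p * α ^ 2 + α : ℤ) : ℤ_[p]))) := by
    convert hg using 2
    rw [map_mul, map_intCast, map_intCast]
    push_cast [hα, CharP.cast_eq_zero]
    field_simp
    ring
  simpa using PadicInt.ternaryAnisotropic_prime_mul_prime_mul hA₁B₁

end

/-- For every prime `p` there exist rationals `a, b` such that the quaternion
algebra `H_{a²+b²+1, a²+a+1+b²}` is ramified at `p`, i.e. the form
`z² - (a²+b²+1) x² - (a²+a+1+b²) y²` is anisotropic over `ℚ_p`. -/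
theorem exists_rationals_special_ramified (p : ℕ) [Fact p.Prime] :
    ∃ a b : ℚ,
      ∀ x y z : ℚ_[p],
        z ^ 2 = ((a ^ 2 + b ^ 2 + 1 : ℚ) : ℚ_[p]) * x ^ 2 +
            ((a ^ 2 + a + 1 + b ^ 2 : ℚ) : ℚ_[p]) * y ^ 2 →
          x = 0 ∧ y = 0 ∧ z = 0 := by
  suffices ∃ a b : ℤ,
      TernaryAnisotropic ((a ^ 2 + b ^ 2 + 1 : ℤ) : ℚ_[p]) (a ^ 2 + a + 1 + b ^ 2 : ℤ) by
    obtain ⟨a, b, h⟩ := this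
    exact ⟨a, b, by simpa [TernaryAnisotropic] using h⟩
  obtain rfl | hp2 := eq_or_ne p 2
  · exact exists_int_ternaryAnisotropic_two
  rcases Nat.odd_mod_four_iff.1 ((Fact.out : p.Prime).eq_two_or_odd.resolve_left hp2) with hp | hp
  · exact exists_int_ternaryAnisotropic_of_mod_four_eq_one hp
  · exact exists_int_ternaryAnisotropic_of_mod_four_eq_three hp
end

section
/- Let p ≥ 11 be a prime and let c ∈ 𝔽_p be a nonzero nonsquare. Then there exist x, y ∈ 𝔽_p with x ≠ 0 and c²·x⁴ + y² + 1 = 0. -/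
/-!
Work in a finite field `F` of odd order `q`, with quadratic character `χ`. Writing `m = c x²`,
it suffices to find a nonsquare `m` and some `y` with `m² + y² + 1 = 0`.
If `-1` is not a square, take `a² + b² = -1`; then `a ≠ 0` and one of `±a` is a nonsquare.
If `-1 = i²`, every `t ≠ 0` gives `m² + 1 = w²` with `m = (t⁻¹ - t)/2` and
`w = (t⁻¹ + t)/2`, and `m` is a nonsquare as soon as `2t(1 - t²)` is. Were `2t(1 - t²)` a square for all `t`, the sum
of its quadratic character would be at least `q - 3`; but that sum is `±φ(-1)` for the
Jacobsthal sum `φ(n) = ∑ₜ χ(t (t² + n))`, and Jacobsthal's argument bounds `φ(n)² ≤ 4q`: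
`φ(n)²` is constant on the class `n · (F^×)²`, which has `(q - 1)/2` elements, while
`∑ₙ φ(n)² ≤ 2q(q - 1)`. Hence `(q - 3)² ≤ 4q`, i.e. `q ≤ 9`.
-/

open Finset Polynomial

section

variable {F : Type*} [Field F] [Fintype F]

theorem exists_sq_add_sq_eq_neg_one (hF : ringChar F ≠ 2) : ∃ a b : F, a ^ 2 + b ^ 2 = -1 := by
  obtain ⟨a, b, hab⟩ := FiniteField.exists_root_sum_quadratic (degree_X_pow 2)
    (degree_X_pow_add_C two_pos (1 : F)) (FiniteField.odd_card_of_char_ne_two hF)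
  exact ⟨a, b, by simpa [← add_assoc, add_eq_zero_iff_eq_neg] using hab⟩

variable [DecidableEq F]

local notation "χ" => quadraticChar F

theorem quadraticChar_le_one (a : F) : χ a ≤ 1 := by
  rcases quadraticChar_isQuadratic F a with h | h | h <;> rw [h] <;> norm_num

theorem sum_quadraticChar_mul_add (hF : ringChar F ≠ 2) {d : F} (hd : d ≠ 0) :
    ∑ x, χ (x * (x + d)) = -1 := by
  have hJ : ∑ y, χ (y * (1 - y)) = -χ (-1) := by
    simpa [jacobiSum, (quadraticChar_isQuadratic F).inv, map_mul] using
      jacobiSum_nontrivial_inv (quadraticChar_ne_one hF)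
  calc ∑ x, χ (x * (x + d))
      = ∑ y, χ (-1) * χ (d ^ 2) * χ (y * (1 - y)) :=
        (Fintype.sum_bijective (fun y => -d * y) (mulLeft_bijective₀ _ (neg_ne_zero.2 hd)) _ _
          fun y => by rw [← map_mul, ← map_mul]; ring_nf).symm
    _ = -1 := by
        rw [← mul_sum, hJ, quadraticChar_sq_one' hd, mul_one, mul_neg, ← sq,
          quadraticChar_sq_one (neg_ne_zero.2 one_ne_zero)]

variable (F) in
theorem sum_quadraticChar_sq : ∑ x : F, χ (x ^ 2) = Fintype.card F - 1 := by
  rw [← sum_erase _ (a := 0) (by simp),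
    sum_congr rfl fun x hx => quadraticChar_sq_one' (ne_of_mem_erase hx), sum_const,
    card_erase_of_mem (mem_univ _), card_univ, nsmul_one, Nat.cast_pred Fintype.card_pos]

theorem sum_quadraticChar_add_mul_add (hF : ringChar F ≠ 2) (a b : F) :
    ∑ n, χ ((a + n) * (b + n)) = if a = b then (Fintype.card F : ℤ) - 1 else -1 := by
  have hshift : ∑ n, χ ((a + n) * (b + n)) = ∑ m, χ (m * (m + (b - a))) :=
    Fintype.sum_equiv (Equiv.addLeft a) _ _ fun n => by simp only [Equiv.coe_addLeft]; ring_nf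
  rw [hshift]
  split_ifs with hab
  · simpa [hab, ← sq] using sum_quadraticChar_sq F
  · exact sum_quadraticChar_mul_add hF (sub_ne_zero.2 (Ne.symm hab))

theorem sum_comp_sq (hF : ringChar F ≠ 2) (f : F → ℤ) :
    ∑ u, f (u ^ 2) = ∑ a, (χ a + 1) * f a := by
  rw [← Fintype.sum_fiberwise' (fun u : F => u ^ 2) f]
  refine sum_congr rfl fun a _ => ?_
  rw [sum_const, ← quadraticChar_card_sqrts hF a, nsmul_eq_mul, card_univ, Set.toFinset_card]
  rfl

def jacobsthalSum (n : F) : ℤ :=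
  ∑ t, χ (t * (t ^ 2 + n))

theorem jacobsthalSum_sq_mul {u : F} (hu : u ≠ 0) (n : F) :
    jacobsthalSum (u ^ 2 * n) = χ u * jacobsthalSum n := by
  rw [jacobsthalSum, jacobsthalSum, mul_sum]
  refine (Fintype.sum_bijective (u * ·) (mulLeft_bijective₀ u hu) _ _ fun s => ?_).symm
  rw [show u * s * ((u * s) ^ 2 + u ^ 2 * n) = u ^ 2 * (u * (s * (s ^ 2 + n))) by ring,
    map_mul χ (u ^ 2), quadraticChar_sq_one' hu, one_mul, map_mul χ u]

theorem sum_quadraticChar_mul_ite_sq_eq_sq (hF : ringChar F ≠ 2) (a : F) :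
    ∑ b, (if a ^ 2 = b ^ 2 then χ (a * b) else 0) = (1 + χ (-1)) * χ (a ^ 2) := by
  rcases eq_or_ne a 0 with rfl | ha
  · simp
  have hpair : ({b | a ^ 2 = b ^ 2} : Finset F) = {a, -a} := by
    ext b
    simp only [mem_filter, mem_univ, true_and, mem_insert, mem_singleton,
      sq_eq_sq_iff_eq_or_eq_neg]
    grind
  have hne : a ≠ -a := fun h => ha ((Ring.eq_self_iff_eq_zero_of_char_ne_two hF).1 h.symm)
  rw [← sum_filter, hpair, sum_pair hne, show a * -a = -1 * a ^ 2 by ring, ← sq, map_mul]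
  ring

theorem sum_jacobsthalSum_sq (hF : ringChar F ≠ 2) :
    ∑ n : F, jacobsthalSum n ^ 2 = (1 + χ (-1)) * Fintype.card F * (Fintype.card F - 1) := by
  calc ∑ n : F, jacobsthalSum n ^ 2
      = ∑ a, ∑ b, χ (a * b) * ∑ n, χ ((a ^ 2 + n) * (b ^ 2 + n)) := by
        simp_rw [pow_two (jacobsthalSum _), jacobsthalSum, sum_mul_sum, mul_sum]
        rw [sum_comm]
        refine sum_congr rfl fun a _ => ?_
        rw [sum_comm]
        refine sum_congr rfl fun b _ => sum_congr rfl fun n _ => ?_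
        rw [← map_mul, ← map_mul]; ring_nf
    _ = ∑ a, ∑ b,
          (Fintype.card F * (if a ^ 2 = b ^ 2 then χ (a * b) else 0) - χ a * χ b) := by
        refine sum_congr rfl fun a _ => sum_congr rfl fun b _ => ?_
        rw [sum_quadraticChar_add_mul_add hF, map_mul]
        split_ifs <;> ring
    _ = (1 + χ (-1)) * Fintype.card F * (Fintype.card F - 1) := by
        simp_rw [sum_sub_distrib, ← mul_sum, ← sum_mul, quadraticChar_sum_zero hF,
          sum_quadraticChar_mul_ite_sq_eq_sq hF, ← mul_sum, sum_quadraticChar_sq]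
        ring

theorem jacobsthalSum_sq_le (hF : ringChar F ≠ 2) {n : F} (hn : n ≠ 0) :
    jacobsthalSum n ^ 2 ≤ 4 * Fintype.card F := by
  set q : ℤ := (Fintype.card F : ℤ)
  have hq : 0 < q - 1 := by have := Fintype.one_lt_card (α := F); omega
  have horbit : (q - 1) * jacobsthalSum n ^ 2 ≤ ∑ u, jacobsthalSum (u ^ 2 * n) ^ 2 :=
    calc (q - 1) * jacobsthalSum n ^ 2 = ∑ u ∈ univ.erase 0, jacobsthalSum (u ^ 2 * n) ^ 2 := by
          rw [sum_congr rfl fun u hu => by rw [jacobsthalSum_sq_mul (ne_of_mem_erase hu), mul_pow,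
            quadraticChar_sq_one (ne_of_mem_erase hu), one_mul], sum_const,
            card_erase_of_mem (mem_univ _), card_univ, nsmul_eq_mul, Nat.cast_pred Fintype.card_pos]
      _ ≤ ∑ u, jacobsthalSum (u ^ 2 * n) ^ 2 :=
          sum_le_sum_of_subset_of_nonneg (erase_subset _ _) fun _ _ _ => sq_nonneg _
  have hfibres : ∑ u, jacobsthalSum (u ^ 2 * n) ^ 2 ≤ 2 * ∑ m, jacobsthalSum m ^ 2 :=
    calc ∑ u, jacobsthalSum (u ^ 2 * n) ^ 2 = ∑ a, (χ a + 1) * jacobsthalSum (a * n) ^ 2 :=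
          sum_comp_sq hF fun a => jacobsthalSum (a * n) ^ 2
      _ ≤ ∑ a, 2 * jacobsthalSum (a * n) ^ 2 :=
          sum_le_sum fun a _ => mul_le_mul_of_nonneg_right (by linarith [quadraticChar_le_one a])
            (sq_nonneg _)
      _ = 2 * ∑ m, jacobsthalSum m ^ 2 := by
          rw [← mul_sum]
          exact congrArg _ (Fintype.sum_bijective _ (mulRight_bijective₀ n hn) _ _ fun _ => rfl)
  have htotal : ∑ m, jacobsthalSum m ^ 2 = (1 + χ (-1)) * q * (q - 1) := sum_jacobsthalSum_sq hF
  have hχ : 0 ≤ (1 - χ (-1)) * (q * (q - 1)) :=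
    mul_nonneg (sub_nonneg.2 (quadraticChar_le_one _)) (mul_nonneg (by omega) hq.le)
  have : (q - 1) * jacobsthalSum n ^ 2 ≤ (q - 1) * (4 * q) := by linarith
  exact le_of_mul_le_mul_left this hq

theorem exists_quadraticChar_two_mul_mul_one_sub_sq_eq_neg_one (hF : ringChar F ≠ 2)
    (hq : 10 ≤ Fintype.card F) : ∃ t : F, χ (2 * t * (1 - t ^ 2)) = -1 := by
  by_contra! h
  set S : Finset F := {0, 1, -1}
  have hnonneg (t : F) : 0 ≤ χ (2 * t * (1 - t ^ 2)) := by
    rcases quadraticChar_isQuadratic F (2 * t * (1 - t ^ 2)) with h' | h' | h'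
    · exact h'.ge
    · exact h' ▸ zero_le_one
    · exact absurd h' (h t)
  have hone (t : F) (ht : t ∈ Sᶜ) : χ (2 * t * (1 - t ^ 2)) = 1 := by
    refine (quadraticChar_dichotomy ?_).resolve_right (h t)
    simp only [S, mem_compl, mem_insert, mem_singleton, not_or] at ht
    have h1 : 1 - t ^ 2 ≠ 0 := by
      rw [sub_ne_zero, ne_comm, Ne, sq_eq_one_iff]; tauto
    exact mul_ne_zero (mul_ne_zero (Ring.two_ne_zero hF) ht.1) h1
  have hlower : (Fintype.card F : ℤ) - 3 ≤ ∑ t, χ (2 * t * (1 - t ^ 2)) :=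
    calc (Fintype.card F : ℤ) - 3 ≤ #Sᶜ := by
          have h1 := card_compl_add_card S
          have h2 : #S ≤ 3 := card_le_three
          omega
      _ = ∑ t ∈ Sᶜ, χ (2 * t * (1 - t ^ 2)) := by
          rw [sum_congr rfl hone, sum_const, nsmul_one]
      _ ≤ ∑ t, χ (2 * t * (1 - t ^ 2)) :=
          sum_le_sum_of_subset_of_nonneg (subset_univ _) fun t _ _ => hnonneg t
  have hsum : ∑ t, χ (2 * t * (1 - t ^ 2)) = χ (-2) * jacobsthalSum (-1 : F) := by
    rw [jacobsthalSum, mul_sum]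
    exact sum_congr rfl fun t _ => by rw [← map_mul]; ring_nf
  have hbound := jacobsthalSum_sq_le hF (neg_ne_zero.2 (one_ne_zero (α := F)))
  have hχ2 := quadraticChar_sq_one (neg_ne_zero.2 (Ring.two_ne_zero hF))
  have : ((Fintype.card F : ℤ) - 3) ^ 2 ≤ 4 * Fintype.card F := by
    calc ((Fintype.card F : ℤ) - 3) ^ 2 ≤ (χ (-2) * jacobsthalSum (-1 : F)) ^ 2 := by
          rw [← hsum]; exact pow_le_pow_left₀ (by omega) hlower 2
      _ = jacobsthalSum (-1 : F) ^ 2 := by rw [mul_pow, hχ2, one_mul]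
      _ ≤ 4 * Fintype.card F := hbound
  have : (10 : ℤ) ≤ Fintype.card F := by exact_mod_cast hq
  nlinarith

theorem exists_not_isSquare_sq_add_sq_add_one_eq_zero_of_not_isSquare_neg_one
    (hF : ringChar F ≠ 2) (h : ¬IsSquare (-1 : F)) :
    ∃ m y : F, ¬IsSquare m ∧ m ^ 2 + y ^ 2 + 1 = 0 := by
  obtain ⟨a, b, hab⟩ := exists_sq_add_sq_eq_neg_one hF
  have ha : a ≠ 0 := by
    rintro rfl
    exact h ⟨b, by rw [← hab]; ring⟩
  by_cases hsq : IsSquare a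
  · refine ⟨-a, b, ?_, by linear_combination hab⟩
    rw [← quadraticChar_neg_one_iff_not_isSquare, neg_eq_neg_one_mul, map_mul,
      quadraticChar_neg_one_iff_not_isSquare.2 h, (quadraticChar_one_iff_isSquare ha).2 hsq]
    norm_num
  · exact ⟨a, b, hsq, by linear_combination hab⟩

theorem exists_not_isSquare_sq_add_sq_add_one_eq_zero_of_isSquare_neg_one
    (hF : ringChar F ≠ 2) (hq : 10 ≤ Fintype.card F) (h : IsSquare (-1 : F)) :
    ∃ m y : F, ¬IsSquare m ∧ m ^ 2 + y ^ 2 + 1 = 0 := by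
  obtain ⟨t, ht⟩ := exists_quadraticChar_two_mul_mul_one_sub_sq_eq_neg_one hF hq
  obtain ⟨i, hi⟩ := h
  have ht0 : t ≠ 0 := by rintro rfl; simp at ht
  have h2 : (2 : F) ≠ 0 := Ring.two_ne_zero hF
  set m := (t⁻¹ - t) / 2
  set w := (t⁻¹ + t) / 2
  have hmw : m ^ 2 + 1 = w ^ 2 := by simp only [m, w]; field_simp; ring
  refine ⟨m, i * w, ?_, by linear_combination hmw - w ^ 2 * hi⟩
  have hm : m * (2 * t) ^ 2 = 2 * t * (1 - t ^ 2) := by simp only [m]; field_simp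
  rw [← quadraticChar_neg_one_iff_not_isSquare, ← ht, ← hm, map_mul,
    quadraticChar_sq_one' (mul_ne_zero h2 ht0), mul_one]

theorem exists_not_isSquare_sq_add_sq_add_one_eq_zero (hF : ringChar F ≠ 2)
    (hq : 10 ≤ Fintype.card F) : ∃ m y : F, ¬IsSquare m ∧ m ^ 2 + y ^ 2 + 1 = 0 := by
  by_cases h : IsSquare (-1 : F)
  · exact exists_not_isSquare_sq_add_sq_add_one_eq_zero_of_isSquare_neg_one hF hq h
  · exact exists_not_isSquare_sq_add_sq_add_one_eq_zero_of_not_isSquare_neg_one hF h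

theorem exists_eq_mul_sq_of_not_isSquare {c m : F} (hc : ¬IsSquare c) (hm : ¬IsSquare m) :
    ∃ x : F, x ≠ 0 ∧ m = c * x ^ 2 := by
  have hc0 : c ≠ 0 := by rintro rfl; exact hc ⟨0, by ring⟩
  have hm0 : m ≠ 0 := by rintro rfl; exact hm ⟨0, by ring⟩
  have hmc : IsSquare (m * c) := by
    rw [← quadraticChar_one_iff_isSquare (mul_ne_zero hm0 hc0), map_mul,
      quadraticChar_neg_one_iff_not_isSquare.2 hm, quadraticChar_neg_one_iff_not_isSquare.2 hc]
    norm_num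
  obtain ⟨r, hr⟩ := hmc
  refine ⟨r / c, div_ne_zero (by rintro rfl; simp_all) hc0, ?_⟩
  field_simp
  linear_combination hr

end

theorem exists_point_on_quartic_curve_general (p : ℕ) [Fact p.Prime] (hp : 11 ≤ p)
    (c : ZMod p) (hc : ¬∃ d : ZMod p, d ^ 2 = c) :
    ∃ x y : ZMod p, x ≠ 0 ∧ c ^ 2 * x ^ 4 + y ^ 2 + 1 = 0 := by
  have hF : ringChar (ZMod p) ≠ 2 := by rw [ZMod.ringChar_zmod_n]; omega
  obtain ⟨m, y, hm, hmy⟩ :=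
    exists_not_isSquare_sq_add_sq_add_one_eq_zero hF (by rw [ZMod.card]; omega)
  have hc' : ¬IsSquare c := fun ⟨d, hd⟩ => hc ⟨d, by rw [hd, sq]⟩
  obtain ⟨x, hx, rfl⟩ := exists_eq_mul_sq_of_not_isSquare hc' hm
  exact ⟨x, y, hx, by linear_combination hmy⟩

/-- For a prime `p ≥ 11` and a nonzero nonsquare `c ∈ 𝔽_p`, the curve
`c² x⁴ + y² + 1 = 0`, `x ≠ 0` has an `𝔽_p`-point. -/
theorem exists_point_on_quartic_curve (p : ℕ) [Fact p.Prime] (hp : 11 ≤ p)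
    (c : ZMod p) (hc0 : c ≠ 0) (hc : ¬∃ d : ZMod p, d ^ 2 = c) :
    ∃ x y : ZMod p, x ≠ 0 ∧ c ^ 2 * x ^ 4 + y ^ 2 + 1 = 0 :=
  exists_point_on_quartic_curve_general p hp c hc
end
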